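/- arXiv:1209.2882 — 3 statements merged into one kernel-verified Lean document; each statement's English description precedes it below -/
import Mathlib

section
/- If u and w are words of integers and w can be obtained from u by a sequence of Knuth equivalences and larger-smaller transpositions, then part(RS(u)) ≤ part(RS(w)) in the dominance order on partitions. -/
namespace BG

variable {α : Type*}

/-- One step of Robinson–Schensted row insertion: insert `x` into a weakly
increasing row, bumping the leftmost entry strictly greater than `x`. -/
def rowInsert [LinearOrder α] : List α → α → List α × Option α
  | [], x => ([x], none)
  | y :: ys, x =>
    if x < y then (x :: ys, some y)
    else
      let p := rowInsert ys x
      (y :: p.1, p.2)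

/-- Insert a letter into a tableau (list of rows, top row first) by
Robinson–Schensted row insertion. -/
def insertT [LinearOrder α] : List (List α) → α → List (List α)
  | [], x => [[x]]
  | r :: rs, x =>
    match rowInsert r x with
    | (r', none) => r' :: rs
    | (r', some y) => r' :: insertT rs y

/-- The insertion tableau of the Robinson–Schensted algorithm. -/
def RS [LinearOrder α] (w : List α) : List (List α) := w.foldl insertT []

/-- The partition underlying a tableau: the list of its row lengths
(top row first, so weakly decreasing). -/
def part (T : List (List α)) : List ℕ := T.map List.length

/-- The reversed negation of a row. -/
def negRow [Neg α] (l : List α) : List α := l.reverse.map (fun x => -x)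

/-- Every column of a left-justified array (list of rows, top to bottom) is
strictly decreasing from top to bottom, where entries must decrease strictly
across any gap occurring in the middle of a column. -/
def ColumnStrict [LT α] (B : List (List α)) : Prop :=
  ∀ j : ℕ, List.Chain' (fun x y => y < x) (B.filterMap (fun r => r[j]?))

/-- A left-justified array is row equivalent to column strict if its entries can
be permuted within rows so that every column is strictly decreasing. -/
def RowEquivColumnStrict [LT α] (A : List (List α)) : Prop :=
  ∃ B, List.Forall₂ List.Perm A B ∧ ColumnStrict B

/-- Elementary Knuth moves on words of integers. -/
inductive KnuthStep : List ℤ → List ℤ → Prop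
  | move1 (u v : List ℤ) (x y z : ℤ) (hxy : x ≤ y) (hyz : y < z) :
      KnuthStep (u ++ x :: z :: y :: v) (u ++ z :: x :: y :: v)
  | move2 (u v : List ℤ) (x y z : ℤ) (hxy : x < y) (hyz : y ≤ z) :
      KnuthStep (u ++ y :: x :: z :: v) (u ++ y :: z :: x :: v)

/-- Knuth equivalence of words of integers. -/
def KnuthEquiv : List ℤ → List ℤ → Prop := Relation.EqvGen KnuthStep

/-- Generators of the τ-equivalence: Knuth moves (R1), negating the last letter
when its absolute value exceeds that of the previous letter (R2), and
transposing the last two letters when they have opposite signs (R3). -/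
inductive TauStep : List ℤ → List ℤ → Prop
  | knuth (u v : List ℤ) : KnuthStep u v → TauStep u v
  | negLast (u : List ℤ) (b a : ℤ) (h : |b| < |a|) :
      TauStep (u ++ [b, a]) (u ++ [b, -a])
  | swapLast (u : List ℤ) (b a : ℤ) (h : b * a < 0) :
      TauStep (u ++ [b, a]) (u ++ [a, b])

/-- The τ-equivalence on words of integers. -/
def TauEquiv : List ℤ → List ℤ → Prop := Relation.EqvGen TauStep

/-- A larger-smaller transposition. -/
inductive LSStep : List ℤ → List ℤ → Prop
  | swap (u w : List ℤ) (a b : ℤ) (h : b < a) :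
      LSStep (u ++ a :: b :: w) (u ++ b :: a :: w)

/-- Dominance order on partitions (weakly decreasing lists of naturals). -/
def DomLE (μ ν : List ℕ) : Prop :=
  μ.sum = ν.sum ∧ ∀ k : ℕ, (μ.take k).sum ≤ (ν.take k).sum

/-- The content of a partition, given as a weakly decreasing list of naturals:
reverse to increasing order `(q₁ ≤ … ≤ q_m)`, prepend a zero part if necessary
so that the number of parts is odd, and take the multiset of
`⌊(qᵢ + i - 1)/2⌋` (1-indexed). -/
def contentP (q : List ℕ) : Multiset ℕ :=
  let q₁ := q.reverse
  let q₂ := if q₁.length % 2 = 1 then q₁ else 0 :: q₁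
  ↑((List.range q₂.length).map (fun i => (q₂.getD i 0 + i) / 2))

/-- Membership in `sTab^≤(P)` where `rows` is the list of row lengths of the
symmetric pyramid `P` (top to bottom): correct shape, skew-symmetry with
respect to the centre of the pyramid, weakly increasing rows, and all entries
in `ℤ` or all entries in `½ + ℤ`. -/
def MemSTabLe (rows : List ℕ) (A : List (List ℚ)) : Prop :=
  A.map List.length = rows ∧
  A.reverse.map negRow = A ∧
  (∀ row ∈ A, List.Chain' (· ≤ ·) row) ∧
  ((∀ x ∈ A.flatten, ∃ z : ℤ, x = (z : ℚ)) ∨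
   (∀ x ∈ A.flatten, ∃ z : ℤ, x = (z : ℚ) + 1 / 2))

/-!
By Greene's theorem, the sum of the first `k` parts of the shape of `RS w` is the largest number
of letters of `w` covered by `k` disjoint weakly increasing subsequences. It therefore suffices to
see that this number cannot decrease along either kind of step.

A larger-smaller transposition `a b ↦ b a` (`a > b`) keeps every weakly increasing subsequence
weakly increasing, since no such subsequence contains both `a` and `b`; and undoing a Knuth move
is such a transposition. For the Knuth move `x z y ↦ z x y` (`x ≤ y < z`), if `x` and `z` lie in
one subsequence, that subsequence and the one through `y` exchange their tails; the other Knuth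
move is the image of this one under reversing and negating the word.

Greene's theorem itself reduces, via the Knuth equivalence of `w` with the reading word of its
insertion tableau, to the reading word of a tableau. There the rows give `k` subsequences of the
right size, and a weakly increasing subsequence meets each column at most once, because the
reading word lists every column in strictly decreasing order.
-/

open List

/- A union of `k` disjoint weakly increasing subsequences of a word is encoded as a coloring of
its letters by `Option (Fin k)`: each color class is one of the subsequences, and uncolored
letters belong to none of them. -/

abbrev ColoredWord (k : ℕ) := List (ℤ × Option (Fin k))

def SameColorLE {k : ℕ} (a b : ℤ × Option (Fin k)) : Prop :=
  ∀ i, a.2 = some i → b.2 = some i → a.1 ≤ b.1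

def IsChainColoring {k : ℕ} (P : ColoredWord k) : Prop := P.Pairwise SameColorLE

def numColored {k : ℕ} (P : ColoredWord k) : ℕ := P.countP (·.2.isSome)

def colorClass {k : ℕ} (i : Fin k) (P : ColoredWord k) : List ℤ :=
  (P.filter (·.2 = some i)).map Prod.fst

def recolor {k l : ℕ} (f : Fin k → Fin l) : ℤ × Option (Fin k) → ℤ × Option (Fin l) :=
  Prod.map id (Option.map f)

def HasIncreasingUnion (k m : ℕ) (w : List ℤ) : Prop :=
  ∃ P : ColoredWord k, P.map Prod.fst = w ∧ IsChainColoring P ∧ m ≤ numColored P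

section ColoredWord

variable {k : ℕ}

@[simp] lemma colorClass_append (i : Fin k) (P Q : ColoredWord k) :
    colorClass i (P ++ Q) = colorClass i P ++ colorClass i Q := by
  simp [colorClass]

@[simp] lemma colorClass_cons (i : Fin k) (a : ℤ × Option (Fin k)) (P : ColoredWord k) :
    colorClass i (a :: P) = if a.2 = some i then a.1 :: colorClass i P else colorClass i P := by
  by_cases h : a.2 = some i <;> simp [colorClass, h]

@[simp] lemma colorClass_map_recolor (σ : Equiv.Perm (Fin k)) (i : Fin k) (P : ColoredWord k) :
    colorClass i (P.map (recolor σ)) = colorClass (σ.symm i) P := by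
  induction P with
  | nil => rfl
  | cons a P ih =>
    rw [map_cons, colorClass_cons, colorClass_cons, ih]
    obtain ⟨x, _ | j⟩ := a <;> simp [recolor, Equiv.eq_symm_apply]

@[simp] lemma numColored_append (P Q : ColoredWord k) :
    numColored (P ++ Q) = numColored P + numColored Q := countP_append

@[simp] lemma numColored_cons (a : ℤ × Option (Fin k)) (P : ColoredWord k) :
    numColored (a :: P) = numColored P + if a.2.isSome then 1 else 0 := by
  simp [numColored, countP_cons]

@[simp] lemma numColored_map_recolor {l : ℕ} (f : Fin k → Fin l) (P : ColoredWord k) :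
    numColored (P.map (recolor f)) = numColored P := by
  simp [numColored, recolor, countP_map, Function.comp_def]

lemma numColored_eq_length_filterMap (P : ColoredWord k) :
    numColored P = (P.filterMap Prod.snd).length := by
  induction P with
  | nil => rfl
  | cons a P ih => rcases a with ⟨_, _ | _⟩ <;> simp [ih]

lemma isChainColoring_iff (P : ColoredWord k) :
    IsChainColoring P ↔ ∀ i, (colorClass i P).IsChain (· ≤ ·) := by
  simp only [IsChainColoring, colorClass, isChain_iff_pairwise, pairwise_map, pairwise_filter,
    decide_eq_true_eq]
  refine ⟨fun h i => h.imp fun hab => hab i, fun h => pairwise_iff_forall_sublist.2 ?_⟩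
  exact fun hab i => pairwise_iff_forall_sublist.1 (h i) hab

lemma IsChainColoring.sublist {P Q : ColoredWord k} (hQ : IsChainColoring Q) (h : P <+ Q) :
    IsChainColoring P :=
  Pairwise.sublist h hQ

lemma HasIncreasingUnion.zero (w : List ℤ) : HasIncreasingUnion k 0 w :=
  ⟨w.map (·, none), by simp [Function.comp_def],
    pairwise_map.2 (pairwise_of_forall fun _ _ _ h => by simp at h), Nat.zero_le _⟩

lemma HasIncreasingUnion.mono {m m' : ℕ} {w : List ℤ} (h : HasIncreasingUnion k m w)
    (hm : m' ≤ m) : HasIncreasingUnion k m' w :=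
  let ⟨P, hP, hc, hle⟩ := h
  ⟨P, hP, hc, hm.trans hle⟩

end ColoredWord

section KnuthInvariance

variable {k m : ℕ}

lemma pairwise_append_swap {R : α → α → Prop} {l r : List α} {a b : α}
    (h : (l ++ a :: b :: r).Pairwise R) (hba : R b a) : (l ++ b :: a :: r).Pairwise R := by
  simp only [pairwise_append, pairwise_cons, mem_cons] at h ⊢
  grind

lemma isChain_concat_of_le [Preorder α] {l : List α} {y z : α} (h : (l ++ [y]).IsChain (· ≤ ·))
    (hyz : y ≤ z) : (l ++ [z]).IsChain (· ≤ ·) := by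
  simp only [isChain_append, head?_cons, Option.mem_some_iff, forall_eq'] at h ⊢
  exact ⟨h.1, isChain_singleton z, fun a ha => (h.2.2 a ha).trans hyz⟩

lemma IsChainColoring.knuth_move1_of_uncolored {Pu Pv : ColoredWord k} {x y z : ℤ} {i : Fin k}
    (hxy : x ≤ y) (hyz : y < z)
    (h : IsChainColoring (Pu ++ (x, some i) :: (z, some i) :: (y, none) :: Pv)) :
    IsChainColoring (Pu ++ (z, none) :: (x, some i) :: (y, some i) :: Pv) := by
  rw [isChainColoring_iff] at h ⊢
  intro l
  rcases eq_or_ne i l with rfl | hl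
  · have hi := h i
    simp only [colorClass_append, colorClass_cons, ↓reduceIte, reduceCtorEq,
      isChain_append_cons_cons] at hi ⊢
    exact ⟨hi.1, hxy, hi.2.2.imp_head fun h => hyz.le.trans h⟩
  · simpa [hl] using h l

/- The subsequences through `x, z` and through `y` exchange their tails after `y`. -/
lemma IsChainColoring.knuth_move1_of_colored {Pu Pv : ColoredWord k} {x y z : ℤ} {i j : Fin k}
    (hxy : x ≤ y) (hyz : y < z) (hij : i ≠ j)
    (h : IsChainColoring (Pu ++ (x, some i) :: (z, some i) :: (y, some j) :: Pv)) :
    IsChainColoring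
      (Pu ++ (z, some j) :: (x, some i) :: (y, some i) :: Pv.map (recolor (Equiv.swap i j))) := by
  rw [isChainColoring_iff] at h ⊢
  have hi := h i
  have hj := h j
  simp only [colorClass_append, colorClass_cons, ↓reduceIte, Option.some.injEq, hij, hij.symm,
    isChain_append_cons_cons] at hi hj
  rw [isChain_split] at hj
  intro l
  rcases eq_or_ne l i with rfl | hli
  · simp only [colorClass_append, colorClass_cons, Option.some.injEq, hij.symm, ↓reduceIte,
      colorClass_map_recolor, Equiv.symm_swap, Equiv.swap_apply_left, isChain_append_cons_cons]
    exact ⟨hi.1, hxy, hj.2⟩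
  rcases eq_or_ne l j with rfl | hlj
  · simp only [colorClass_append, colorClass_cons, ↓reduceIte, Option.some.injEq, hij,
      colorClass_map_recolor, Equiv.symm_swap, Equiv.swap_apply_right]
    rw [isChain_split]
    exact ⟨isChain_concat_of_le hj.1 hyz.le, hi.2.2⟩
  · simpa [hli, hlj, Ne.symm hli, Ne.symm hlj, Equiv.swap_apply_of_ne_of_ne hli hlj] using h l

lemma HasIncreasingUnion.of_lsStep {u w : List ℤ} (hs : LSStep u w)
    (h : HasIncreasingUnion k m u) : HasIncreasingUnion k m w := by
  obtain ⟨u, w, a, b, hba⟩ := hs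
  obtain ⟨P, hP, hc, hm⟩ := h
  simp only [map_eq_append_iff, map_eq_cons_iff] at hP
  obtain ⟨Pu, _, rfl, rfl, ⟨a, ca⟩, _, rfl, rfl, ⟨b, cb⟩, Pv, rfl, rfl, rfl⟩ := hP
  refine ⟨Pu ++ (b, cb) :: (a, ca) :: Pv, by simp, pairwise_append_swap hc fun _ _ _ => hba.le,
    hm.trans_eq ?_⟩
  simp only [numColored_append, numColored_cons]
  omega

lemma HasIncreasingUnion.knuth_move1 {u v : List ℤ} {x y z : ℤ} (hxy : x ≤ y) (hyz : y < z)
    (h : HasIncreasingUnion k m (u ++ x :: z :: y :: v)) :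
    HasIncreasingUnion k m (u ++ z :: x :: y :: v) := by
  obtain ⟨P, hP, hc, hm⟩ := h
  simp only [map_eq_append_iff, map_eq_cons_iff] at hP
  obtain ⟨Pu, _, rfl, rfl, ⟨x, a⟩, _, rfl, rfl, ⟨z, b⟩, _, rfl, rfl, ⟨y, c⟩, Pv, rfl, rfl, rfl⟩ :=
    hP
  by_cases hzx : SameColorLE (z, b) (x, a)
  · refine ⟨_, by simp, pairwise_append_swap hc hzx, hm.trans_eq ?_⟩
    simp only [numColored_append, numColored_cons]
    omega
  obtain ⟨i, rfl, rfl, -⟩ : ∃ i, b = some i ∧ a = some i ∧ x < z := by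
    simpa [SameColorLE] using hzx
  rcases c with _ | j
  · exact ⟨_, by simp, hc.knuth_move1_of_uncolored hxy hyz, hm.trans_eq (by simp)⟩
  · have hij : i ≠ j := by
      rintro rfl
      have hzy := ((isChainColoring_iff _).1 hc i)
      simp only [colorClass_append, colorClass_cons, ↓reduceIte, isChain_append_cons_cons,
        isChain_cons_cons] at hzy
      exact hyz.not_ge hzy.2.2.1
    exact ⟨_, by simp [recolor], hc.knuth_move1_of_colored hxy hyz hij, hm.trans_eq (by simp)⟩

lemma HasIncreasingUnion.negRow {w : List ℤ} (h : HasIncreasingUnion k m w) :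
    HasIncreasingUnion k m (negRow w) := by
  obtain ⟨P, rfl, hc, hm⟩ := h
  refine ⟨(P.map fun a => (-a.1, a.2)).reverse, by simp [BG.negRow], ?_, ?_⟩
  · simp only [IsChainColoring, pairwise_reverse, pairwise_map]
    exact hc.imp fun hab i hb ha => neg_le_neg (hab i ha hb)
  · simpa [numColored, countP_map, Function.comp_def] using hm

lemma negRow_negRow (l : List ℤ) : negRow (negRow l) = l := by
  simp [negRow]

lemma negRow_append_cons_cons_cons (u v : List ℤ) (a b c : ℤ) :
    negRow (u ++ a :: b :: c :: v) = negRow v ++ -c :: -b :: -a :: negRow u := by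
  simp [negRow]

/- Reversing and negating the word turns this Knuth move into the other one. -/
lemma HasIncreasingUnion.knuth_move2 {u v : List ℤ} {x y z : ℤ} (hxy : x < y) (hyz : y ≤ z)
    (h : HasIncreasingUnion k m (u ++ y :: x :: z :: v)) :
    HasIncreasingUnion k m (u ++ y :: z :: x :: v) := by
  have h' := h.negRow
  rw [negRow_append_cons_cons_cons] at h'
  have h'' := (h'.knuth_move1 (neg_le_neg hyz) (neg_lt_neg hxy)).negRow
  rwa [← negRow_append_cons_cons_cons, negRow_negRow] at h''

lemma KnuthStep.lsStep_symm {u w : List ℤ} (h : KnuthStep u w) : LSStep w u := by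
  cases h with
  | move1 u v x y z hxy hyz => exact .swap u (y :: v) z x (hxy.trans_lt hyz)
  | move2 u v x y z hxy hyz => simpa using LSStep.swap (u ++ [y]) v z x (hxy.trans_le hyz)

lemma HasIncreasingUnion.of_knuthStep {u w : List ℤ} (hs : KnuthStep u w)
    (h : HasIncreasingUnion k m u) : HasIncreasingUnion k m w := by
  cases hs with
  | move1 u v x y z hxy hyz => exact h.knuth_move1 hxy hyz
  | move2 u v x y z hxy hyz => exact h.knuth_move2 hxy hyz

lemma KnuthEquiv.hasIncreasingUnion_iff {u w : List ℤ} (h : KnuthEquiv u w) :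
    HasIncreasingUnion k m u ↔ HasIncreasingUnion k m w := by
  induction h with
  | rel _ _ h => exact ⟨.of_knuthStep h, .of_lsStep h.lsStep_symm⟩
  | refl => exact Iff.rfl
  | symm _ _ _ ih => exact ih.symm
  | trans _ _ _ _ _ ih₁ ih₂ => exact ih₁.trans ih₂

end KnuthInvariance

inductive RowLT [LT α] : List α → List α → Prop
  | nil (r : List α) : RowLT r []
  | cons {a b : α} {r s : List α} : a < b → RowLT r s → RowLT (a :: r) (b :: s)

def IsTableau [Preorder α] (T : List (List α)) : Prop :=
  (∀ r ∈ T, r.Pairwise (· ≤ ·)) ∧ T.IsChain RowLT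

def readingWord (T : List (List α)) : List α := T.reverse.flatten

section Tableau

variable [Preorder α] {r r' s : List α}

lemma RowLT.length_le (h : RowLT r s) : s.length ≤ r.length := by
  induction h <;> simp [*]

lemma RowLT.trans {t : List α} (h₁ : RowLT r s) (h₂ : RowLT s t) : RowLT r t := by
  induction h₁ generalizing t with
  | nil => cases h₂; exact .nil _
  | cons hab _ ih =>
    cases h₂ with
    | nil => exact .nil _
    | cons hbc h => exact .cons (hab.trans hbc) (ih h)

instance : Trans (RowLT : List α → List α → Prop) RowLT RowLT := ⟨RowLT.trans⟩

lemma RowLT.append_right (h : RowLT r s) (l : List α) : RowLT (r ++ l) s := by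
  induction h with
  | nil => exact .nil _
  | cons hab _ ih => exact .cons hab ih

lemma RowLT.of_forall₂_le (h : RowLT r s) (hr : Forall₂ (· ≤ ·) r' r) : RowLT r' s := by
  induction h generalizing r' with
  | nil => exact .nil _
  | cons hab _ ih =>
    cases hr with
    | cons ha hr => exact .cons (ha.trans_lt hab) (ih hr)

lemma RowLT.drop_one (h : RowLT r s) : RowLT (r.drop 1) (s.drop 1) := by
  cases h with
  | nil => exact .nil _
  | cons _ h => exact h

lemma IsTableau.drop_one {T : List (List α)} (hT : IsTableau T) : IsTableau (T.map (drop 1)) := by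
  refine ⟨?_, isChain_map_of_isChain _ (fun _ _ h => h.drop_one) hT.2⟩
  simp only [mem_map, forall_exists_index, and_imp, forall_apply_eq_imp_iff₂]
  exact fun r hr => (hT.1 r hr).sublist (drop_sublist 1 r)

lemma IsTableau.pairwise_part {T : List (List α)} (hT : IsTableau T) :
    (part T).Pairwise (· ≥ ·) :=
  pairwise_map.2 (hT.2.pairwise.imp RowLT.length_le)

lemma IsTableau.pairwise_readingWord_take_one {T : List (List α)} (hT : IsTableau T) :
    (readingWord (T.map (take 1))).Pairwise (· > ·) := by
  refine pairwise_flatten.2 ⟨fun l hl => ?_, pairwise_reverse.2 (pairwise_map.2 ?_)⟩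
  · obtain ⟨r, -, rfl⟩ := mem_map.1 (mem_reverse.1 hl)
    rcases r with _ | ⟨a, r⟩ <;> simp
  · refine hT.2.pairwise.imp fun h => ?_
    cases h with
    | nil => simp
    | cons hab _ => simpa using hab

end Tableau

section Insertion

variable [LinearOrder α] {r r' s : List α} {x y : α}

lemma rowInsert_eq_none (h : rowInsert r x = (r', none)) : r' = r ++ [x] := by
  induction r generalizing r' with
  | nil => simp_all [rowInsert]
  | cons a r ih =>
    simp only [rowInsert] at h
    split_ifs at h
    · simp at h
    · obtain ⟨rfl, h⟩ := Prod.ext_iff.1 h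
      simp [ih (Prod.ext rfl h)]

lemma lt_of_rowInsert_eq_some (h : rowInsert r x = (r', some y)) : x < y := by
  induction r generalizing r' with
  | nil => simp [rowInsert] at h
  | cons a r ih =>
    simp only [rowInsert] at h
    split_ifs at h with hxa
    · simp_all
    · exact ih (Prod.ext rfl (Prod.ext_iff.1 h).2)

lemma forall₂_le_of_rowInsert_eq_some (h : rowInsert r x = (r', some y)) :
    Forall₂ (· ≤ ·) r' r := by
  induction r generalizing r' with
  | nil => simp [rowInsert] at h
  | cons a r ih =>
    simp only [rowInsert] at h
    split_ifs at h with hxa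
    · obtain ⟨rfl, -⟩ := Prod.ext_iff.1 h
      exact .cons hxa.le (forall₂_same.2 fun _ _ => le_rfl)
    · obtain ⟨rfl, h⟩ := Prod.ext_iff.1 h
      exact .cons le_rfl (ih (Prod.ext rfl h))

lemma exists_cons_of_rowInsert_eq_some (h : rowInsert r x = (r', some y)) :
    ∃ c r₀, r' = c :: r₀ ∧ c ≤ x := by
  cases r with
  | nil => simp [rowInsert] at h
  | cons a r =>
    simp only [rowInsert] at h
    split_ifs at h with hxa
    · exact ⟨x, r, (Prod.ext_iff.1 h).1.symm, le_rfl⟩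
    · exact ⟨a, _, (Prod.ext_iff.1 h).1.symm, not_lt.1 hxa⟩

lemma mem_rowInsert {a : α} (h : a ∈ (rowInsert r x).1) : a ∈ r ∨ a = x := by
  induction r with
  | nil => simp_all [rowInsert]
  | cons b r ih =>
    simp only [rowInsert] at h
    split_ifs at h <;> simp only [mem_cons] at h <;> grind

lemma pairwise_rowInsert (hr : r.Pairwise (· ≤ ·)) : (rowInsert r x).1.Pairwise (· ≤ ·) := by
  induction r with
  | nil => simp [rowInsert]
  | cons a r ih =>
    rw [pairwise_cons] at hr
    simp only [rowInsert]
    split_ifs with hxa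
    · exact pairwise_cons.2 ⟨fun b hb => hxa.le.trans (hr.1 b hb), hr.2⟩
    · refine pairwise_cons.2 ⟨fun b hb => ?_, ih hr.2⟩
      rcases mem_rowInsert hb with hb | rfl
      exacts [hr.1 b hb, not_lt.1 hxa]

lemma RowLT.rowInsert_bumped (hrs : RowLT r s) (h : rowInsert r x = (r', some y)) :
    RowLT r' (rowInsert s y).1 := by
  induction r generalizing x r' y s with
  | nil => simp [rowInsert] at h
  | cons a r ih =>
    simp only [rowInsert] at h
    split_ifs at h with hxa
    · obtain ⟨rfl, rfl⟩ : x :: r = r' ∧ a = y := by simpa using h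
      cases hrs with
      | nil => exact .cons hxa (.nil _)
      | cons hab hrs => simpa [rowInsert, hab] using RowLT.cons hxa hrs
    · obtain ⟨rfl, hy⟩ := Prod.ext_iff.1 h
      have hy : rowInsert r x = ((rowInsert r x).1, some y) := Prod.ext rfl hy
      have hay : a < y := (not_lt.1 hxa).trans_lt (lt_of_rowInsert_eq_some hy)
      cases hrs with
      | nil => exact .cons hay (.nil _)
      | @cons _ b _ s hab hrs =>
        simp only [rowInsert]
        split_ifs with hyb
        · exact .cons hay (hrs.of_forall₂_le (forall₂_le_of_rowInsert_eq_some hy))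
        · exact .cons hab (ih hrs hy)

lemma head?_insertT (T : List (List α)) (x : α) :
    (insertT T x).head? = some (rowInsert (T.headD []) x).1 := by
  cases T with
  | nil => rfl
  | cons r T =>
    rcases h : rowInsert r x with ⟨r', _ | y⟩ <;> simp [insertT, h]

lemma IsTableau.insertT {T : List (List α)} (hT : IsTableau T) (x : α) :
    IsTableau (insertT T x) := by
  induction T generalizing x with
  | nil => exact ⟨by simp [BG.insertT], by simp [BG.insertT]⟩
  | cons r T ih =>
    obtain ⟨hrows, hchain⟩ := hT
    rw [isChain_cons] at hchain
    have hr : (rowInsert r x).1.Pairwise (· ≤ ·) := pairwise_rowInsert (hrows r mem_cons_self)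
    have hrT : RowLT r (T.headD []) := by
      cases T with
      | nil => exact .nil _
      | cons s T => exact hchain.1 s rfl
    rcases h : rowInsert r x with ⟨r', _ | y⟩
    · rw [h, rowInsert_eq_none h] at hr
      have hins : BG.insertT (r :: T) x = (r ++ [x]) :: T := by
        simp [BG.insertT, h, rowInsert_eq_none h]
      rw [hins]
      refine ⟨?_, isChain_cons.2 ⟨fun s hs => (hchain.1 s hs).append_right _, hchain.2⟩⟩
      simpa [or_imp, forall_and, hr] using fun s hs => hrows s (mem_cons_of_mem r hs)
    · rw [h] at hr
      have hins : BG.insertT (r :: T) x = r' :: BG.insertT T y := by simp [BG.insertT, h]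
      obtain ⟨hrows', hchain'⟩ := ih ⟨fun s hs => hrows s (mem_cons_of_mem r hs), hchain.2⟩ y
      rw [hins]
      refine ⟨by simpa [or_imp, forall_and, hr] using hrows', isChain_cons.2 ⟨?_, hchain'⟩⟩
      rw [head?_insertT]
      rintro s ⟨⟩
      exact hrT.rowInsert_bumped h

lemma isTableau_RS (w : List α) : IsTableau (RS w) := by
  suffices ∀ T : List (List α), IsTableau T → IsTableau (w.foldl insertT T) from
    this [] ⟨by simp, .nil⟩
  induction w with
  | nil => exact fun T hT => hT
  | cons x w ih => exact fun T hT => ih _ (hT.insertT x)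

end Insertion

section ReadingWord

@[simp] lemma readingWord_nil : readingWord ([] : List (List α)) = [] := rfl

@[simp] lemma readingWord_cons (r : List α) (T : List (List α)) :
    readingWord (r :: T) = readingWord T ++ r := by
  simp [readingWord]

lemma length_readingWord (T : List (List α)) : (readingWord T).length = (part T).sum := by
  induction T with
  | nil => rfl
  | cons r T ih => simp [ih, part, add_comm]

lemma map_readingWord {β : Type*} (f : α → β) (T : List (List α)) :
    (readingWord T).map f = readingWord (T.map (map f)) := by
  induction T with
  | nil => rfl
  | cons r T ih => simp [ih]

lemma readingWord_map_sublist {f : List α → List α} (hf : ∀ r, f r <+ r) (T : List (List α)) :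
    readingWord (T.map f) <+ readingWord T := by
  induction T with
  | nil => exact .slnil
  | cons r T ih => simpa using ih.append (hf r)

lemma exists_readingWord_eq_of_map_eq {β : Type*} {f : β → α} {P : List β}
    {T : List (List α)} (h : P.map f = readingWord T) :
    ∃ CT : List (List β), CT.map (map f) = T ∧ P = readingWord CT := by
  induction T generalizing P with
  | nil => exact ⟨[], rfl, by simpa using h⟩
  | cons r T ih =>
    rw [readingWord_cons] at h
    obtain ⟨P₁, P₂, rfl, h₁, rfl⟩ := map_eq_append_iff.1 h
    obtain ⟨CT, rfl, rfl⟩ := ih h₁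
    exact ⟨P₂ :: CT, rfl, by simp⟩

lemma length_readingWord_take_one (T : List (List α)) :
    (readingWord (T.map (take 1))).length = (part T).countP (0 < ·) := by
  induction T with
  | nil => rfl
  | cons r T ih =>
    simp only [part] at ih
    rcases r with _ | ⟨a, r⟩ <;> simp [ih, part, add_comm]

lemma KnuthStep.append_append {a b : List ℤ} (h : KnuthStep a b) (p q : List ℤ) :
    KnuthStep (p ++ a ++ q) (p ++ b ++ q) := by
  cases h with
  | move1 u v x y z hxy hyz => simpa using KnuthStep.move1 (p ++ u) (v ++ q) x y z hxy hyz
  | move2 u v x y z hxy hyz => simpa using KnuthStep.move2 (p ++ u) (v ++ q) x y z hxy hyz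

lemma KnuthEquiv.append_append {a b : List ℤ} (h : KnuthEquiv a b) (p q : List ℤ) :
    KnuthEquiv (p ++ a ++ q) (p ++ b ++ q) := by
  induction h with
  | rel _ _ h => exact .rel _ _ (h.append_append p q)
  | refl => exact .refl _
  | symm _ _ _ ih => exact ih.symm
  | trans _ _ _ _ _ ih₁ ih₂ => exact ih₁.trans _ _ _ ih₂

lemma KnuthEquiv.length_eq {u w : List ℤ} (h : KnuthEquiv u w) : u.length = w.length := by
  induction h with
  | rel _ _ h => cases h <;> simp
  | refl => rfl
  | symm _ _ _ ih => exact ih.symm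
  | trans _ _ _ _ _ ih₁ ih₂ => exact ih₁.trans ih₂

lemma knuthEquiv_cons_append_singleton {a x : ℤ} {r : List ℤ} (hxa : x < a)
    (hr : (a :: r).Pairwise (· ≤ ·)) : KnuthEquiv (a :: r ++ [x]) (a :: x :: r) := by
  induction r generalizing a with
  | nil => exact .refl _
  | cons t r ih =>
    obtain ⟨hat, hr⟩ := pairwise_cons.1 hr
    have hat : a ≤ t := hat t mem_cons_self
    have hx : KnuthEquiv (a :: t :: r ++ [x]) (a :: t :: x :: r) := by
      simpa using (ih (hxa.trans_le hat) hr).append_append [a] []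
    exact hx.trans _ _ _ (.symm _ _ (.rel _ _ (by simpa using KnuthStep.move2 [] r x a t hxa hat)))

lemma knuthEquiv_rowInsert {r r' : List ℤ} {x y : ℤ} (hr : r.Pairwise (· ≤ ·))
    (h : rowInsert r x = (r', some y)) : KnuthEquiv (r ++ [x]) (y :: r') := by
  induction r generalizing r' with
  | nil => simp [rowInsert] at h
  | cons a r ih =>
    simp only [rowInsert] at h
    split_ifs at h with hxa
    · obtain ⟨rfl, rfl⟩ : x :: r = r' ∧ a = y := by simpa using h
      exact knuthEquiv_cons_append_singleton hxa hr
    · obtain ⟨rfl, hy⟩ := Prod.ext_iff.1 h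
      have hy : rowInsert r x = ((rowInsert r x).1, some y) := Prod.ext rfl hy
      obtain ⟨c, r₀, hc, hcx⟩ := exists_cons_of_rowInsert_eq_some hy
      obtain ⟨har, hr⟩ := pairwise_cons.1 hr
      have hac : a ≤ c := by
        rcases mem_rowInsert (hc ▸ mem_cons_self : c ∈ (rowInsert r x).1) with hc | rfl
        exacts [har c hc, not_lt.1 hxa]
      have hcy : c < y := hcx.trans_lt (lt_of_rowInsert_eq_some hy)
      have hrow : KnuthEquiv (a :: r ++ [x]) (a :: y :: (rowInsert r x).1) := by
        simpa using (ih hr hy).append_append [a] []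
      refine hrow.trans _ _ _ (.rel _ _ ?_)
      rw [hc]
      simpa using KnuthStep.move1 [] r₀ a c y hac hcy

lemma knuthEquiv_insertT {T : List (List ℤ)} (hT : ∀ r ∈ T, r.Pairwise (· ≤ ·)) (x : ℤ) :
    KnuthEquiv (readingWord T ++ [x]) (readingWord (insertT T x)) := by
  induction T generalizing x with
  | nil => exact .refl _
  | cons r T ih =>
    rcases h : rowInsert r x with ⟨r', _ | y⟩
    · simp only [insertT, h, rowInsert_eq_none h, readingWord_cons, append_assoc]
      exact .refl _
    · have hrow := (knuthEquiv_rowInsert (hT r mem_cons_self) h).append_append (readingWord T) []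
      have hrest := (ih (fun s hs => hT s (mem_cons_of_mem r hs)) y).append_append [] r'
      simp only [insertT, h, readingWord_cons, append_assoc, append_nil, nil_append,
        singleton_append] at hrow hrest ⊢
      exact hrow.trans _ _ _ hrest

lemma knuthEquiv_readingWord_RS (w : List ℤ) : KnuthEquiv w (readingWord (RS w)) := by
  induction w using List.reverseRecOn with
  | nil => exact .refl _
  | append_singleton w x ih =>
    rw [RS, foldl_append, foldl_cons, foldl_nil, ← RS]
    exact (ih.append_append [] [x]).trans _ _ _ (knuthEquiv_insertT (isTableau_RS w).1 x)

lemma sum_part_RS (w : List ℤ) : (part (RS w)).sum = w.length := by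
  rw [← length_readingWord, (knuthEquiv_readingWord_RS w).length_eq]

end ReadingWord

section Greene

variable {k m : ℕ}

lemma hasIncreasingUnion_readingWord {T : List (List ℤ)} (hT : ∀ r ∈ T, r.Pairwise (· ≤ ·))
    (k : ℕ) : HasIncreasingUnion k ((part T).take k).sum (readingWord T) := by
  induction T generalizing k with
  | nil => simpa [part] using HasIncreasingUnion.zero (k := k) []
  | cons r T ih =>
    rcases k with _ | k
    · exact .zero _
    obtain ⟨P, hP, hc, hm⟩ := ih (fun s hs => hT s (mem_cons_of_mem r hs)) k
    refine ⟨P.map (recolor Fin.succ) ++ r.map (·, some 0), ?_, ?_, ?_⟩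
    · simp [← hP, recolor, Function.comp_def]
    · refine pairwise_append.2 ⟨pairwise_map.2 (hc.imp ?_), pairwise_map.2 ?_, ?_⟩
      · intro a b hab i ha hb
        simp only [recolor, Prod.map_snd, Option.map_eq_some_iff] at ha hb
        obtain ⟨i', ha, rfl⟩ := ha
        obtain ⟨i'', hb, hi⟩ := hb
        exact hab i' ha (Fin.succ_injective _ hi ▸ hb)
      · exact (hT r mem_cons_self).imp fun hab _ _ _ => hab
      · simp only [mem_map]
        rintro _ ⟨⟨x, c⟩, -, rfl⟩ _ ⟨y, -, rfl⟩ i hi h0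
        cases Option.some.inj h0
        simp [recolor, Fin.succ_ne_zero] at hi
    · simp only [numColored_append, part, map_cons, take_succ_cons, sum_cons] at hm ⊢
      have hr : numColored (r.map (·, some (0 : Fin (k + 1)))) = r.length := by
        simp [numColored, countP_map, Function.comp_def]
      rw [numColored_map_recolor, hr]
      omega

lemma numColored_readingWord (CT : List (ColoredWord k)) :
    numColored (readingWord CT) =
      numColored (readingWord (CT.map (take 1))) + numColored (readingWord (CT.map (drop 1))) := by
  induction CT with
  | nil => rfl
  | cons r CT ih =>
    have hr : numColored r = numColored (r.take 1) + numColored (r.drop 1) := by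
      rw [← numColored_append, take_append_drop]
    simp only [readingWord_cons, map_cons, numColored_append, ih, hr]
    omega

lemma numColored_le_of_pairwise_gt {P : ColoredWord k} (hP : IsChainColoring P)
    (hdec : (P.map Prod.fst).Pairwise (· > ·)) : numColored P ≤ k := by
  have hnodup : (P.filterMap Prod.snd).Nodup := by
    refine (hP.and (pairwise_map.1 hdec)).filterMap _ ?_
    rintro a b ⟨hab, hgt⟩ i hi j hj rfl
    exact absurd (hab i hi hj) (not_le.2 hgt)
  simpa [numColored_eq_length_filterMap] using hnodup.length_le_card

lemma sum_eq_sum_map_pred_add_countP (l : List ℕ) :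
    l.sum = (l.map (· - 1)).sum + l.countP (0 < ·) := by
  induction l with
  | nil => rfl
  | cons a l ih =>
    simp only [sum_cons, map_cons, countP_cons, ih, decide_eq_true_eq]
    split_ifs <;> omega

lemma min_countP_le_countP_take {l : List ℕ} (hl : l.Pairwise (· ≥ ·)) (k : ℕ) :
    min k (l.countP (0 < ·)) ≤ (l.take k).countP (0 < ·) := by
  induction l generalizing k with
  | nil => simp
  | cons a l ih =>
    obtain ⟨hal, hl⟩ := pairwise_cons.1 hl
    cases k with
    | zero => simp
    | succ k =>
      rcases Nat.eq_zero_or_pos a with rfl | ha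
      · have : l.countP (0 < ·) = 0 := countP_eq_zero.2 fun b hb => by simp [hal b hb]
        simp [this]
      · simpa [countP_cons, ha] using ih hl k

/- The letters of the first column are read in strictly decreasing order, so at most
`min k (number of rows)` of them are colored; then induct on the tableau with that column
removed. -/
lemma numColored_readingWord_le {CT : List (ColoredWord k)}
    (hT : IsTableau (CT.map (map Prod.fst))) (hc : IsChainColoring (readingWord CT)) :
    numColored (readingWord CT) ≤ ((part CT).take k).sum := by
  obtain ⟨n, hn⟩ : ∃ n, ∀ r ∈ CT, r.length ≤ n :=
    ⟨(part CT).sum, fun r hr => le_sum_of_mem (mem_map_of_mem (f := length) hr)⟩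
  induction n generalizing CT with
  | zero =>
    have : readingWord CT = [] := by
      simpa [readingWord, flatten_eq_nil_iff] using hn
    simp [this, numColored]
  | succ n ih =>
    have hpart : part (CT.map (drop 1)) = (part CT).map (· - 1) := by
      simp [part, Function.comp_def]
    have hheads :
        numColored (readingWord (CT.map (take 1))) ≤ ((part CT).take k).countP (0 < ·) := by
      have hk := numColored_le_of_pairwise_gt
        (hc.sublist (readingWord_map_sublist (take_sublist 1) CT))
        (by simpa [map_readingWord, map_take, Function.comp_def] using
          hT.pairwise_readingWord_take_one)
      have hlen : numColored (readingWord (CT.map (take 1))) ≤ (part CT).countP (0 < ·) :=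
        countP_le_length.trans (length_readingWord_take_one CT).le
      refine (le_min hk hlen).trans (min_countP_le_countP_take ?_ k)
      simpa [part, Function.comp_def] using hT.pairwise_part
    have htails := ih (CT := CT.map (drop 1))
      (by simpa [map_drop, Function.comp_def] using hT.drop_one)
      (hc.sublist (readingWord_map_sublist (drop_sublist 1) CT))
      (by simpa using fun r hr => Nat.sub_le_of_le_add (hn r hr))
    rw [numColored_readingWord, sum_eq_sum_map_pred_add_countP, map_take, ← hpart]
    omega

lemma hasIncreasingUnion_readingWord_iff {T : List (List ℤ)} (hT : IsTableau T) :
    HasIncreasingUnion k m (readingWord T) ↔ m ≤ ((part T).take k).sum := by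
  refine ⟨fun ⟨P, hP, hc, hm⟩ => ?_, (hasIncreasingUnion_readingWord hT.1 k).mono⟩
  obtain ⟨CT, rfl, rfl⟩ := exists_readingWord_eq_of_map_eq hP
  simpa [part, Function.comp_def] using hm.trans (numColored_readingWord_le hT hc)

theorem hasIncreasingUnion_iff_le_sum_take_part_RS (w : List ℤ) :
    HasIncreasingUnion k m w ↔ m ≤ ((part (RS w)).take k).sum :=
  (knuthEquiv_readingWord_RS w).hasIncreasingUnion_iff.trans
    (hasIncreasingUnion_readingWord_iff (isTableau_RS w))

end Greene

lemma DomLE.trans {μ ν ρ : List ℕ} (h₁ : DomLE μ ν) (h₂ : DomLE ν ρ) : DomLE μ ρ :=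
  ⟨h₁.1.trans h₂.1, fun k => (h₁.2 k).trans (h₂.2 k)⟩

lemma domLE_part_RS_of_step {u w : List ℤ} (h : KnuthStep u w ∨ KnuthStep w u ∨ LSStep u w) :
    DomLE (part (RS u)) (part (RS w)) := by
  have hlen : u.length = w.length := by
    rcases h with h | h | h <;> cases h <;> simp
  have hstep (k m : ℕ) : HasIncreasingUnion k m u → HasIncreasingUnion k m w := by
    rcases h with h | h | h
    exacts [.of_knuthStep h, .of_lsStep h.lsStep_symm, .of_lsStep h]
  refine ⟨by rw [sum_part_RS, sum_part_RS, hlen], fun k => ?_⟩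
  rw [← hasIncreasingUnion_iff_le_sum_take_part_RS]
  exact hstep _ _ ((hasIncreasingUnion_iff_le_sum_take_part_RS u).2 le_rfl)

/-- If `u` and `w` are words of integers and `w` can be obtained from `u` by a
sequence of Knuth equivalences and larger-smaller transpositions, then
`part(RS(u)) ≤ part(RS(w))` in the dominance order on partitions. -/
theorem stmt2 (u w : List ℤ)
    (h : Relation.ReflTransGen
      (fun x y => KnuthStep x y ∨ KnuthStep y x ∨ LSStep x y) u w) :
    DomLE (part (RS u)) (part (RS w)) := by
  induction h with
  | refl => exact ⟨rfl, fun _ => le_rfl⟩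
  | tail _ hstep ih => exact ih.trans (domLE_part_RS_of_step hstep)

end BG
end

section
/- Let w = (a, b_1, …, b_m, c, 0, −c, −b_m, …, −b_1, −a) be a skew-symmetric word of integers such that part(RS(a, b_1, …, b_m, c)) = (m, 1, 1), b_1 < b_2 < … < b_m < 0, c < 0, and −c > a. Then w is Knuth equivalent to (a, b_1, …, b_m, −c, 0, c, −b_m, …, −b_1, −a). -/
/-!
Since `b₁ < ⋯ < b_m`, inserting `c` into `RS(a, b₁, …, b_m)` can create a third row only by
bumping some `x = b_i` with `c < x < a`, and this pivot makes the exchange possible. Slide `a`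
right until it stands just before `x`. Then `c` slides left until it follows `x`, and `-c` slides
left over the increasing run `b_{i+1} ⋯ b_m 0`, whose letters are at most the letter `-b_m < -c`
behind it, until it follows `c`. The moves `x c (-c) → x (-c) c` and `a x (-c) → a (-c) x`
(as `c < x < a ≤ -c`) bring `-c` to the front, and sliding `-c` and `c` back to the right puts
them in exchanged places.
-/

namespace BG

variable {α : Type*}

section RowInsertion

variable [LinearOrder α]

theorem rowInsert_of_forall_le {x : α} : ∀ {r : List α}, (∀ y ∈ r, y ≤ x) →
    rowInsert r x = (r ++ [x], none)
  | [], _ => rfl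
  | y :: r, h => by
    have ih : rowInsert r x = (r ++ [x], none) :=
      rowInsert_of_forall_le fun z hz => h z (List.mem_cons_of_mem y hz)
    simp [rowInsert, not_lt.mpr (h y List.mem_cons_self), ih]

theorem mem_and_lt_of_rowInsert_eq_some {x y : α} : ∀ {r r' : List α},
    rowInsert r x = (r', some y) → y ∈ r ∧ x < y
  | [], _, h => by simp [rowInsert] at h
  | z :: r, r', h => by
    by_cases hxz : x < z
    · simp only [rowInsert, hxz, if_true, Prod.mk.injEq, Option.some.injEq] at h
      exact ⟨h.2 ▸ List.mem_cons_self, h.2 ▸ hxz⟩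
    · simp only [rowInsert, hxz, if_false, Prod.mk.injEq] at h
      obtain ⟨hy, hxy⟩ := mem_and_lt_of_rowInsert_eq_some (r' := (rowInsert r x).1)
        (Prod.ext rfl h.2)
      exact ⟨List.mem_cons_of_mem z hy, hxy⟩

theorem foldl_insertT_cons_of_sorted {rs : List (List α)} : ∀ {l r : List α},
    l.Pairwise (· ≤ ·) → (∀ x ∈ r, ∀ y ∈ l, x ≤ y) →
    l.foldl insertT (r :: rs) = (r ++ l) :: rs
  | [], _, _, _ => by simp
  | y :: l, r, hl, hrl => by
    have hins : insertT (r :: rs) y = (r ++ [y]) :: rs := by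
      simp [insertT, rowInsert_of_forall_le fun x hx => hrl x hx y List.mem_cons_self]
    rw [List.foldl_cons, hins, foldl_insertT_cons_of_sorted (List.pairwise_cons.mp hl).2]
    · simp
    · intro x hx z hz
      rcases List.mem_append.mp hx with hx | hx
      · exact hrl x hx z (List.mem_cons_of_mem y hz)
      · exact List.eq_of_mem_singleton hx ▸ (List.pairwise_cons.mp hl).1 z hz

theorem length_insertT_singleton_le (r : List α) (x : α) : (insertT [r] x).length ≤ 2 := by
  rcases h : rowInsert r x with ⟨r', _ | _⟩ <;> simp [insertT, h]

/-- In a three-row tableau `RS(a, B, c)` the bottom row is `a` and the middle row is the letter of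
`B` bumped by `c`. -/
theorem exists_mem_between_of_length_RS_eq_three {a c : α} {B : List α}
    (hB : B.Pairwise (· ≤ ·)) (h : (RS (a :: (B ++ [c]))).length = 3) :
    ∃ x ∈ B, c < x ∧ x < a := by
  have hRS : RS (a :: (B ++ [c])) = insertT (B.foldl insertT [[a]]) c := by
    simp only [RS, List.foldl_cons, List.foldl_append, List.foldl_nil]
    rfl
  rw [hRS] at h
  rcases B with _ | ⟨b, B⟩
  · have := length_insertT_singleton_le [a] c
    simp only [List.foldl_nil] at h
    omega
  by_cases hba : b < a
  · have hrows : (b :: B).foldl insertT [[a]] = [b :: B, [a]] := by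
      rw [List.foldl_cons, show insertT [[a]] b = [[b], [a]] by simp [insertT, rowInsert, hba],
        foldl_insertT_cons_of_sorted (List.pairwise_cons.mp hB).2]
      · rfl
      · simpa using (List.pairwise_cons.mp hB).1
    rw [hrows] at h
    rcases hc : rowInsert (b :: B) c with ⟨r', _ | y⟩
    · simp [insertT, hc] at h
    · obtain ⟨hy, hcy⟩ := mem_and_lt_of_rowInsert_eq_some hc
      refine ⟨y, hy, hcy, ?_⟩
      by_contra hya
      have h2 : insertT [b :: B, [a]] c = [r', [a, y]] := by
        simp only [insertT, hc]
        simp [rowInsert, hya]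
      simp [h2] at h
  · rw [foldl_insertT_cons_of_sorted (r := [a]) hB] at h
    · have := length_insertT_singleton_le ([a] ++ b :: B) c
      omega
    · simp only [List.mem_singleton, forall_eq, List.forall_mem_cons]
      exact ⟨not_lt.mp hba, fun y hy => (not_lt.mp hba).trans ((List.pairwise_cons.mp hB).1 y hy)⟩

end RowInsertion

local infix:50 " ≈ₖ " => KnuthEquiv

namespace KnuthEquiv

theorem refl (w : List ℤ) : w ≈ₖ w := Relation.EqvGen.refl w

theorem symm {u v : List ℤ} (h : u ≈ₖ v) : v ≈ₖ u := Relation.EqvGen.symm _ _ h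

theorem trans {u v w : List ℤ} (h₁ : u ≈ₖ v) (h₂ : v ≈ₖ w) : u ≈ₖ w :=
  Relation.EqvGen.trans _ _ _ h₁ h₂

instance : Trans KnuthEquiv KnuthEquiv KnuthEquiv := ⟨trans⟩

theorem of_step {u v : List ℤ} (h : KnuthStep u v) : u ≈ₖ v := Relation.EqvGen.rel _ _ h

theorem append {u v : List ℤ} (h : u ≈ₖ v) (p s : List ℤ) : p ++ u ++ s ≈ₖ p ++ v ++ s := by
  induction h with
  | rel u v h =>
    refine of_step ?_
    cases h with
    | move1 u v x y z hxy hyz => simpa using KnuthStep.move1 (p ++ u) (v ++ s) x y z hxy hyz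
    | move2 u v x y z hxy hyz => simpa using KnuthStep.move2 (p ++ u) (v ++ s) x y z hxy hyz
  | refl => exact refl _
  | symm _ _ _ ih => exact ih.symm
  | trans _ _ _ _ _ ih₁ ih₂ => exact ih₁.trans ih₂

end KnuthEquiv

theorem knuthEquiv_slide_right {y z : ℤ} {L : List ℤ} (hL : (L ++ [y]).Pairwise (· ≤ ·))
    (hyz : y < z) : z :: (L ++ [y]) ≈ₖ L ++ [z, y] := by
  induction L using List.reverseRecOn generalizing y with
  | nil => exact .refl _
  | append_singleton L t ih =>
    obtain ⟨hLt, -, hLty⟩ := List.pairwise_append.mp hL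
    have hty : t ≤ y := hLty t (by simp) y (by simp)
    calc z :: (L ++ [t] ++ [y]) = [] ++ z :: (L ++ [t]) ++ [y] := by simp
      _ ≈ₖ [] ++ (L ++ [z, t]) ++ [y] := (ih hLt (hty.trans_lt hyz)).append [] [y]
      _ = L ++ z :: t :: y :: [] := by simp
      _ ≈ₖ L ++ t :: z :: y :: [] := .symm (.of_step (.move1 L [] t y z hty hyz))
      _ = L ++ [t] ++ [z, y] := by simp

theorem knuthEquiv_slide_left {c d : ℤ} {L : List ℤ} (hL : (d :: L).Pairwise (· ≤ ·))
    (hcd : c < d) : d :: (L ++ [c]) ≈ₖ d :: c :: L := by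
  induction L generalizing d with
  | nil => exact .refl _
  | cons t L ih =>
    obtain ⟨hdt, hL⟩ := List.pairwise_cons.mp hL
    have htL := hdt t List.mem_cons_self
    calc d :: (t :: L ++ [c]) = [d] ++ t :: (L ++ [c]) ++ [] := by simp
      _ ≈ₖ [d] ++ t :: c :: L ++ [] := (ih hL (hcd.trans_le htL)).append [d] []
      _ = [] ++ d :: t :: c :: L := by simp
      _ ≈ₖ [] ++ d :: c :: t :: L := .symm (.of_step (.move2 [] L c d t hcd htL))
      _ = d :: c :: t :: L := by simp

theorem knuthEquiv_exchange_of_head {a c d e C X : ℤ} {L : List ℤ}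
    (hL : (d :: (L ++ [e, X])).Pairwise (· ≤ ·)) (hcd : c < d) (hda : d < a) (haC : a ≤ C)
    (hXC : X < C) : a :: d :: (L ++ [c, e, C, X]) ≈ₖ a :: d :: (L ++ [C, e, c, X]) := by
  have hdL : (d :: L).Pairwise (· ≤ ·) := hL.sublist (by simp)
  have hdLe : (d :: (L ++ [e])).Pairwise (· ≤ ·) := hL.sublist (by simp)
  have hLeX : (L ++ [e] ++ [X]).Pairwise (· ≤ ·) := (List.pairwise_cons.mp hL).2.sublist (by simp)
  have heX : e ≤ X := (List.pairwise_append.mp hLeX).2.2 e (by simp) X (by simp)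
  calc a :: d :: (L ++ [c, e, C, X]) = [a] ++ d :: (L ++ [c]) ++ [e, C, X] := by simp
    _ ≈ₖ [a] ++ d :: c :: L ++ [e, C, X] := (knuthEquiv_slide_left hdL hcd).append _ _
    _ = [a, d, c] ++ (L ++ [e] ++ [C, X]) ++ [] := by simp
    _ ≈ₖ [a, d, c] ++ C :: (L ++ [e] ++ [X]) ++ [] :=
      ((knuthEquiv_slide_right hLeX hXC).append _ _).symm
    _ = [a] ++ d :: c :: C :: (L ++ [e, X]) := by simp
    _ ≈ₖ [a] ++ d :: C :: c :: (L ++ [e, X]) := .of_step (.move2 _ _ c d C hcd (hda.le.trans haC))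
    _ = [] ++ a :: d :: C :: (c :: (L ++ [e, X])) := by simp
    _ ≈ₖ [] ++ a :: C :: d :: (c :: (L ++ [e, X])) := .of_step (.move2 _ _ d a C hda haC)
    _ = [a, C] ++ d :: c :: (L ++ [e]) ++ [X] := by simp
    _ ≈ₖ [a, C] ++ d :: (L ++ [e] ++ [c]) ++ [X] :=
      ((knuthEquiv_slide_left hdLe hcd).append _ _).symm
    _ = [a] ++ C :: (d :: L ++ [e]) ++ [c, X] := by simp
    _ ≈ₖ [a] ++ (d :: L ++ [C, e]) ++ [c, X] :=
      (knuthEquiv_slide_right hdLe (heX.trans_lt hXC)).append _ _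
    _ = a :: d :: (L ++ [C, e, c, X]) := by simp

theorem knuthEquiv_exchange {a c e C X : ℤ} {L : List ℤ} (hL : (L ++ [e, X]).Pairwise (· ≤ ·))
    (hx : ∃ x ∈ L, c < x ∧ x < a) (haC : a ≤ C) (hXC : X < C) :
    a :: (L ++ [c, e, C, X]) ≈ₖ a :: (L ++ [C, e, c, X]) := by
  obtain ⟨x, hxL, hcx, hxa⟩ := hx
  obtain ⟨P, Q, rfl⟩ := List.append_of_mem hxL
  have hPx : (P ++ [x]).Pairwise (· ≤ ·) := hL.sublist (by simp)
  have hxQ : (x :: (Q ++ [e, X])).Pairwise (· ≤ ·) := hL.sublist (by simp)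
  have slide (t : List ℤ) : a :: (P ++ x :: (Q ++ t)) ≈ₖ P ++ a :: x :: (Q ++ t) := by
    simpa using (knuthEquiv_slide_right hPx hxa).append [] (Q ++ t)
  calc a :: (P ++ x :: Q ++ [c, e, C, X]) = a :: (P ++ x :: (Q ++ [c, e, C, X])) := by simp
    _ ≈ₖ P ++ a :: x :: (Q ++ [c, e, C, X]) := slide _
    _ ≈ₖ P ++ a :: x :: (Q ++ [C, e, c, X]) := by
      simpa using (knuthEquiv_exchange_of_head hxQ hcx hxa haC hXC).append P []
    _ ≈ₖ a :: (P ++ x :: (Q ++ [C, e, c, X])) := (slide _).symm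
    _ = a :: (P ++ x :: Q ++ [C, e, c, X]) := by simp

/-- Let `w = (a, b_1, …, b_m, c, 0, -c, -b_m, …, -b_1, -a)` be a skew-symmetric
word of integers with `part(RS(a, b_1, …, b_m, c)) = (m, 1, 1)`,
`b_1 < … < b_m < 0`, `c < 0` and `-c > a`.  Then `w` is Knuth equivalent to
`(a, b_1, …, b_m, -c, 0, c, -b_m, …, -b_1, -a)`. -/
theorem stmt5 (m : ℕ) (hm : 0 < m) (a c : ℤ)
    (b : Fin m → ℤ) (hb : StrictMono b)
    (hbm : b ⟨m - 1, by omega⟩ < 0) (hca : a < -c)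
    (hpart : part (RS (a :: (List.ofFn b ++ [c]))) = [m, 1, 1]) :
    KnuthEquiv
      (a :: (List.ofFn b ++ [c, 0, -c] ++ negRow (List.ofFn b) ++ [-a]))
      (a :: (List.ofFn b ++ [-c, 0, c] ++ negRow (List.ofFn b) ++ [-a])) := by
  obtain ⟨n, rfl⟩ : ∃ n, m = n + 1 := ⟨m - 1, by omega⟩
  have hβ : b (Fin.last n) < 0 := hbm
  have hle_last (i : Fin (n + 1)) : b i ≤ b (Fin.last n) := hb.monotone (Fin.le_last i)
  have hneg : negRow (List.ofFn b) =
      -b (Fin.last n) :: negRow (List.ofFn fun i => b i.castSucc) := by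
    rw [List.ofFn_succ']
    simp [negRow]
  have hsorted : (List.ofFn b ++ [0, -b (Fin.last n)]).Pairwise (· ≤ ·) := by
    simp only [List.pairwise_append, List.pairwise_ofFn, List.mem_ofFn]
    refine ⟨fun i j hij => (hb hij).le, List.pairwise_pair.mpr (by omega), ?_⟩
    rintro _ ⟨i, rfl⟩
    have := hle_last i
    simp only [List.mem_cons, List.not_mem_nil, or_false, forall_eq_or_imp, forall_eq]
    omega
  obtain ⟨x, hx, hcx, hxa⟩ := exists_mem_between_of_length_RS_eq_three
    (List.pairwise_append.mp hsorted).1 (by simpa [part] using congrArg List.length hpart)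
  obtain ⟨i, rfl⟩ := List.mem_ofFn.mp hx
  have hswap := (knuthEquiv_exchange hsorted ⟨b i, hx, hcx, hxa⟩ hca.le
    (by linarith [hle_last i])).append [] (negRow (List.ofFn fun i => b i.castSucc) ++ [-a])
  rw [hneg]
  simpa using hswap

end BG
end

section
/- Let l ≤ m be even positive integers. Then content((l, l, m)) = {l/2, l/2, m/2 + 1}, and the only partition of 2l+m whose content equals content((l, l, m)) is (l, l, m) (parts listed in increasing order). -/
namespace BG

variable {α : Type*}

/-!
For a partition `q₁ ≤ q₂ ≤ q₃` the content is `{⌊q₁/2⌋, ⌊(q₂+1)/2⌋, ⌊(q₃+2)/2⌋}`, and appending a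
zero part to a partition with an even number of parts does not change its content. A partition
with the content of `(l, l, m)` therefore has three parts, one of them possibly zero. Each content
value fixes its part up to parity; the sum `2l + m` together with `q₁ ≤ q₂` then fixes the
parities, so `q = (l, l, m)`, and a zero part would force `l = 0`.
-/

lemma contentP_triple (c b a : ℕ) :
    contentP [c, b, a] = {a / 2, (b + 1) / 2, (c + 2) / 2} := by
  simp [contentP, List.range_succ]
  rfl

lemma card_contentP (q : List ℕ) : Multiset.card (contentP q) = 2 * (q.length / 2) + 1 := by
  simp only [contentP, List.length_reverse, Multiset.coe_card, List.length_map, List.length_range]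
  split <;> simp only [List.length_cons, List.length_reverse] <;> omega

lemma contentP_append_zero {q : List ℕ} (hq : Even q.length) : contentP (q ++ [0]) = contentP q := by
  have hodd : ¬ q.length % 2 = 1 := by simpa [Nat.even_iff] using hq
  have hodd' : (q.length + 1) % 2 = 1 := by omega
  simp only [contentP, List.reverse_append, List.reverse_singleton, List.singleton_append,
    List.length_cons, List.length_reverse, if_pos hodd', if_neg hodd]

lemma eq_of_contentP_triple_eq {a b c l m : ℕ} (hab : a ≤ b) (hbc : b ≤ c) (hlm : l ≤ m)
    (hl : 2 ∣ l) (hsum : c + b + a = 2 * l + m) (h : contentP [c, b, a] = contentP [m, l, l]) :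
    c = m ∧ b = l ∧ a = l := by
  rw [contentP_triple, contentP_triple] at h
  have mem : ∀ x ∈ ({a / 2, (b + 1) / 2, (c + 2) / 2} : Multiset ℕ),
      x = l / 2 ∨ x = (l + 1) / 2 ∨ x = (m + 2) / 2 := by
    intro x hx
    rw [h] at hx
    simpa using hx
  have hs := congrArg Multiset.sum h
  simp only [Multiset.insert_eq_cons, Multiset.sum_cons, Multiset.sum_singleton] at hs
  have ha := mem (a / 2) (by simp)
  have hb := mem ((b + 1) / 2) (by simp)
  have hc := mem ((c + 2) / 2) (by simp)
  omega

theorem stmt12_general (l m : ℕ) (hlm : l ≤ m) (hl2 : 2 ∣ l) :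
    contentP [m, l, l] = ({l / 2, l / 2, m / 2 + 1} : Multiset ℕ) ∧
    ∀ q : List ℕ, List.Chain' (· ≥ ·) q → (∀ x ∈ q, 0 < x) → q.sum = 2 * l + m →
      (contentP q = contentP [m, l, l] ↔ q = [m, l, l]) := by
  refine ⟨?_, fun q hq hpos hsum => ⟨fun hc => ?_, fun h => h ▸ rfl⟩⟩
  · rw [contentP_triple, show (l + 1) / 2 = l / 2 by omega, show (m + 2) / 2 = m / 2 + 1 by omega]
  have hlen : q.length = 2 ∨ q.length = 3 := by
    have hcard := congrArg Multiset.card hc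
    rw [card_contentP, card_contentP] at hcard
    simp only [List.length_cons, List.length_nil] at hcard
    omega
  rcases hlen with hlen | hlen
  · obtain ⟨b, a, rfl⟩ := List.length_eq_two.mp hlen
    rw [← contentP_append_zero (by simp)] at hc
    have hab : a ≤ b := (List.isChain_cons_cons.mp hq).1
    obtain ⟨-, hal, hl0⟩ :=
      eq_of_contentP_triple_eq (Nat.zero_le a) hab hlm hl2 (by simpa using hsum) hc
    exact absurd (hal.trans hl0.symm) (hpos a (by simp)).ne'
  · obtain ⟨c, b, a, rfl⟩ := List.length_eq_three.mp hlen
    obtain ⟨hbc, hq⟩ := List.isChain_cons_cons.mp hq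
    obtain ⟨hab, -⟩ := List.isChain_cons_cons.mp hq
    obtain ⟨rfl, rfl, rfl⟩ :=
      eq_of_contentP_triple_eq hab hbc hlm hl2 (by simpa [add_assoc] using hsum) hc
    rfl

/-- Let `l ≤ m` be even positive integers.  Then
`content((l, l, m)) = {l/2, l/2, m/2 + 1}`, and the only partition of `2l + m`
(weakly decreasing list of positive naturals) whose content equals
`content((l, l, m))` is `(l, l, m)` (parts listed in increasing order, i.e.
the decreasing list `[m, l, l]`). -/
theorem stmt12 (l m : ℕ) (hl : 0 < l) (hlm : l ≤ m) (hl2 : 2 ∣ l) (hm2 : 2 ∣ m) :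
    contentP [m, l, l] = ({l / 2, l / 2, m / 2 + 1} : Multiset ℕ) ∧
    ∀ q : List ℕ, List.Chain' (· ≥ ·) q → (∀ x ∈ q, 0 < x) → q.sum = 2 * l + m →
      (contentP q = contentP [m, l, l] ↔ q = [m, l, l]) :=
  stmt12_general l m hlm hl2

end BG
end
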